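/- arXiv:1912.02686 — 6 statements merged into one kernel-verified Lean document; each statement's English description precedes it below -/
import Mathlib

section
/- (Zero-sum over off-page blocks.) With the B-CP* construction (Δ = 1/2), for any i, j, m ∈ [N_e], k ∈ [N_r], and n' ∈ [N_r] with n' ≠ k: ⟨a^{(b)}_{i,α(n',m)} ∘ b^{(b)}_{j,α(n',m)}, c^{(b)}_{k,α(n',m)}⟩ + ⟨a^{(b)}_{i,β(n',m)} ∘ b^{(b)}_{j,β(n',m)}, c^{(b)}_{k,β(n',m)}⟩ = 0. -/
noncomputable def pvec : Fin 4 → ℝ := ![1/2, 1/2, -(1/2), -(1/2)]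
noncomputable def qvec : Fin 4 → ℝ := ![1/2, -(1/2), 1/2, -(1/2)]
noncomputable def rvec : Fin 4 → ℝ := ![1/2, 1/2, 1/2, 1/2]

noncomputable def trip (u v w : Fin 4 → ℝ) : ℝ := ∑ t : Fin 4, u t * v t * w t

def iotaF (Ne γ : ℕ) : ℕ := ((γ - 1) % (2 * Ne)) % Ne + 1
def kappaF (Ne γ : ℕ) : ℕ := (γ - 1) / (2 * Ne) + 1
def alphaF (Ne k m : ℕ) : ℕ := 2 * Ne * (k - 1) + m
def betaF (Ne k m : ℕ) : ℕ := alphaF Ne k m + Ne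

noncomputable def avec (Ne i γ : ℕ) : Fin 4 → ℝ :=
  if γ % Ne = i % Ne then pvec else qvec

noncomputable def bvec (Ne : ℕ) (x : ℕ → ℕ → ℕ → ℕ) (j γ : ℕ) : Fin 4 → ℝ :=
  if x (iotaF Ne γ) j (kappaF Ne γ) = 1 then pvec else rvec

noncomputable def cvec (Ne k γ : ℕ) : Fin 4 → ℝ :=
  if (γ - 1) % (2 * Ne) < Ne ∨ kappaF Ne γ = k then rvec else -rvec

lemma trip_neg (u v w : Fin 4 → ℝ) : trip u v (-w) = -trip u v w := by
  simp [trip, Finset.sum_neg_distrib, mul_neg]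

theorem stmt13 (Ne Nr : ℕ) (hNe : 0 < Ne) (hNr : 0 < Nr)
    (x : ℕ → ℕ → ℕ → ℕ) (hx : ∀ i j k, x i j k = 0 ∨ x i j k = 1)
    (i j m k n' : ℕ)
    (hi1 : 1 ≤ i) (hi2 : i ≤ Ne) (hj1 : 1 ≤ j) (hj2 : j ≤ Ne)
    (hm1 : 1 ≤ m) (hm2 : m ≤ Ne) (hk1 : 1 ≤ k) (hk2 : k ≤ Nr)
    (hn1 : 1 ≤ n') (hn2 : n' ≤ Nr) (hnk : n' ≠ k) :
    trip (avec Ne i (alphaF Ne n' m)) (bvec Ne x j (alphaF Ne n' m))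
        (cvec Ne k (alphaF Ne n' m)) +
    trip (avec Ne i (betaF Ne n' m)) (bvec Ne x j (betaF Ne n' m))
        (cvec Ne k (betaF Ne n' m)) = 0 := by
  set α := alphaF Ne n' m with hαdef
  set β := betaF Ne n' m with hβdef
  have hα1 : α - 1 = 2 * Ne * (n' - 1) + (m - 1) := by
    simp only [hαdef, alphaF]; omega
  have hβ1 : β - 1 = 2 * Ne * (n' - 1) + (m - 1 + Ne) := by
    simp only [hβdef, hαdef, betaF, alphaF]; omega
  have hmodα : (α - 1) % (2 * Ne) = m - 1 := by
    rw [hα1, Nat.mul_add_mod]; exact Nat.mod_eq_of_lt (by omega)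
  have hmodβ : (β - 1) % (2 * Ne) = m - 1 + Ne := by
    rw [hβ1, Nat.mul_add_mod]; exact Nat.mod_eq_of_lt (by omega)
  have hdivα : (α - 1) / (2 * Ne) = n' - 1 := by
    rw [hα1, Nat.mul_add_div (by omega), Nat.div_eq_of_lt (by omega)]; omega
  have hdivβ : (β - 1) / (2 * Ne) = n' - 1 := by
    rw [hβ1, Nat.mul_add_div (by omega), Nat.div_eq_of_lt (by omega)]; omega
  have hkα : kappaF Ne α = n' := by simp [kappaF, hdivα]; omega
  have hkβ : kappaF Ne β = n' := by simp [kappaF, hdivβ]; omega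
  have hiota : iotaF Ne β = iotaF Ne α := by
    simp [iotaF, hmodα, hmodβ, Nat.add_mod_right]
  have ha : avec Ne i β = avec Ne i α := by
    have : β % Ne = α % Ne := by
      simp only [hβdef, betaF]; exact Nat.add_mod_right _ _
    simp [avec, this]
  have hb : bvec Ne x j β = bvec Ne x j α := by
    simp [bvec, hiota, hkα, hkβ]
  have hcα : cvec Ne k α = rvec := by
    simp [cvec, hmodα]; omega
  have hcβ : cvec Ne k β = -rvec := by
    simp [cvec, hmodβ, hkβ]; exact fun h => (hnk h).elim
  rw [ha, hb, hcα, hcβ, trip_neg]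
  ring
end

section
/- (Same-page off-diagonal blocks vanish.) With the B-CP* construction, for any i, j ∈ [N_e], k ∈ [N_r], and m' ∈ [N_e] with m' ≠ i: ⟨a^{(b)}_{i,α(k,m')} ∘ b^{(b)}_{j,α(k,m')}, c^{(b)}_{k,α(k,m')}⟩ = 0, and the same for β(k,m') in place of α(k,m'). -/
lemma trip_q (Ne : ℕ) (x : ℕ → ℕ → ℕ → ℕ) (j k γ : ℕ) :
    trip qvec (bvec Ne x j γ) (cvec Ne k γ) = 0 := by
  unfold bvec cvec
  split <;> split <;>
    simp [trip, qvec, pvec, rvec, Fin.sum_univ_four] <;> ring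

lemma mod_ne (Ne i m' : ℕ) (hi1 : 1 ≤ i) (hi2 : i ≤ Ne)
    (hm1 : 1 ≤ m') (hm2 : m' ≤ Ne) (hmi : m' ≠ i) : m' % Ne ≠ i % Ne := by
  rcases eq_or_lt_of_le hm2 with h | h
  · subst h
    rw [Nat.mod_self, Nat.mod_eq_of_lt (by omega)]
    omega
  · rw [Nat.mod_eq_of_lt h]
    rcases eq_or_lt_of_le hi2 with h' | h'
    · subst h'; rw [Nat.mod_self]; omega
    · rw [Nat.mod_eq_of_lt h']; exact hmi

theorem stmt14 (Ne Nr : ℕ) (hNe : 0 < Ne) (hNr : 0 < Nr)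
    (x : ℕ → ℕ → ℕ → ℕ) (hx : ∀ i j k, x i j k = 0 ∨ x i j k = 1)
    (i j k m' : ℕ)
    (hi1 : 1 ≤ i) (hi2 : i ≤ Ne) (hj1 : 1 ≤ j) (hj2 : j ≤ Ne)
    (hk1 : 1 ≤ k) (hk2 : k ≤ Nr)
    (hm1 : 1 ≤ m') (hm2 : m' ≤ Ne) (hmi : m' ≠ i) :
    trip (avec Ne i (alphaF Ne k m')) (bvec Ne x j (alphaF Ne k m'))
        (cvec Ne k (alphaF Ne k m')) = 0 ∧
    trip (avec Ne i (betaF Ne k m')) (bvec Ne x j (betaF Ne k m'))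
        (cvec Ne k (betaF Ne k m')) = 0 := by
  have hne := mod_ne Ne i m' hi1 hi2 hm1 hm2 hmi
  have ha : alphaF Ne k m' % Ne = m' % Ne := by
    rw [show alphaF Ne k m' = m' + Ne * (2 * (k - 1)) by unfold alphaF; ring,
      Nat.add_mul_mod_self_left]
  have hb : betaF Ne k m' % Ne = m' % Ne := by
    rw [show betaF Ne k m' = m' + Ne * (2 * (k - 1) + 1) by unfold betaF alphaF; ring,
      Nat.add_mul_mod_self_left]
  constructor
  · rw [show avec Ne i (alphaF Ne k m') = qvec by simp [avec, ha, hne]]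
    exact trip_q ..
  · rw [show avec Ne i (betaF Ne k m') = qvec by simp [avec, hb, hne]]
    exact trip_q ..
end

section
/- (Designated blocks agree across halfpages.) With the B-CP* construction, for any i, j ∈ [N_e] and k ∈ [N_r]: ⟨a^{(b)}_{i,α(k,i)} ∘ b^{(b)}_{j,α(k,i)}, c^{(b)}_{k,α(k,i)}⟩ = ⟨a^{(b)}_{i,β(k,i)} ∘ b^{(b)}_{j,β(k,i)}, c^{(b)}_{k,β(k,i)}⟩. -/
theorem stmt16 (Ne Nr : ℕ) (hNe : 0 < Ne) (hNr : 0 < Nr)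
    (x : ℕ → ℕ → ℕ → ℕ) (hx : ∀ i j k, x i j k = 0 ∨ x i j k = 1)
    (i j k : ℕ)
    (hi1 : 1 ≤ i) (hi2 : i ≤ Ne) (hj1 : 1 ≤ j) (hj2 : j ≤ Ne)
    (hk1 : 1 ≤ k) (hk2 : k ≤ Nr) :
    trip (avec Ne i (alphaF Ne k i)) (bvec Ne x j (alphaF Ne k i))
        (cvec Ne k (alphaF Ne k i)) =
    trip (avec Ne i (betaF Ne k i)) (bvec Ne x j (betaF Ne k i))
        (cvec Ne k (betaF Ne k i)) := by
  obtain ⟨s, rfl⟩ : ∃ s, i = s + 1 := ⟨i - 1, by omega⟩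
  obtain ⟨t, rfl⟩ : ∃ t, k = t + 1 := ⟨k - 1, by omega⟩
  have hs : s < Ne := by omega
  have hα : alphaF Ne (t + 1) (s + 1) - 1 = 2 * Ne * t + s := by
    simp [alphaF]
  have hβ : betaF Ne (t + 1) (s + 1) - 1 = 2 * Ne * t + (s + Ne) := by
    simp [betaF, alphaF]; omega
  have hmα : (2 * Ne * t + s) % (2 * Ne) = s := by
    rw [Nat.add_comm, Nat.add_mul_mod_self_left]; exact Nat.mod_eq_of_lt (by omega)
  have hmβ : (2 * Ne * t + (s + Ne)) % (2 * Ne) = s + Ne := by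
    rw [Nat.add_comm, Nat.add_mul_mod_self_left]; exact Nat.mod_eq_of_lt (by omega)
  have hdα : (2 * Ne * t + s) / (2 * Ne) = t := by
    rw [Nat.add_comm, Nat.add_mul_div_left _ _ (show 0 < 2 * Ne by omega),
      Nat.div_eq_of_lt (by omega), Nat.zero_add]
  have hdβ : (2 * Ne * t + (s + Ne)) / (2 * Ne) = t := by
    rw [Nat.add_comm, Nat.add_mul_div_left _ _ (show 0 < 2 * Ne by omega),
      Nat.div_eq_of_lt (by omega), Nat.zero_add]
  have hiα : iotaF Ne (alphaF Ne (t + 1) (s + 1)) = s + 1 := by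
    rw [iotaF, hα, hmα, Nat.mod_eq_of_lt hs]
  have hiβ : iotaF Ne (betaF Ne (t + 1) (s + 1)) = s + 1 := by
    rw [iotaF, hβ, hmβ, Nat.add_mod_right, Nat.mod_eq_of_lt hs]
  have hkα : kappaF Ne (alphaF Ne (t + 1) (s + 1)) = t + 1 := by
    rw [kappaF, hα, hdα]
  have hkβ : kappaF Ne (betaF Ne (t + 1) (s + 1)) = t + 1 := by
    rw [kappaF, hβ, hdβ]
  have haα : avec Ne (s + 1) (alphaF Ne (t + 1) (s + 1)) = pvec := by
    rw [avec, if_pos]; simp [alphaF, Nat.add_comm, Nat.mul_comm 2 Ne,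
      Nat.mul_assoc, Nat.add_mul_mod_self_left]
  have haβ : avec Ne (s + 1) (betaF Ne (t + 1) (s + 1)) = pvec := by
    rw [avec, if_pos]; simp [betaF, alphaF, Nat.add_mod_right,
      Nat.add_comm, Nat.mul_comm 2 Ne, Nat.mul_assoc, Nat.add_mul_mod_self_left]
  have hcα : cvec Ne (t + 1) (alphaF Ne (t + 1) (s + 1)) = rvec := by
    rw [cvec, if_pos]; left; rw [hα, hmα]; exact hs
  have hcβ : cvec Ne (t + 1) (betaF Ne (t + 1) (s + 1)) = rvec := by
    rw [cvec, if_pos]; right; exact hkβ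
  rw [haα, haβ, hcα, hcβ, bvec, bvec, hiα, hiβ, hkα, hkβ]
end

section
/- (Score identity for designated block.) With the B-CP* construction (Δ = 1/2), for any i, j ∈ [N_e] and k ∈ [N_r]: 2·⟨a^{(b)}_{i,α(k,i)} ∘ b^{(b)}_{j,α(k,i)}, c^{(b)}_{k,α(k,i)}⟩ equals 1 if x_{ijk} = 1 and equals 0 if x_{ijk} = 0. -/
theorem stmt17 (Ne Nr : ℕ) (hNe : 0 < Ne) (hNr : 0 < Nr)
    (x : ℕ → ℕ → ℕ → ℕ) (hx : ∀ i j k, x i j k = 0 ∨ x i j k = 1)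
    (i j k : ℕ)
    (hi1 : 1 ≤ i) (hi2 : i ≤ Ne) (hj1 : 1 ≤ j) (hj2 : j ≤ Ne)
    (hk1 : 1 ≤ k) (hk2 : k ≤ Nr) :
    2 * trip (avec Ne i (alphaF Ne k i)) (bvec Ne x j (alphaF Ne k i))
        (cvec Ne k (alphaF Ne k i)) =
      if x i j k = 1 then 1 else 0 := by
  have hsub : alphaF Ne k i - 1 = 2 * Ne * (k - 1) + (i - 1) := by
    unfold alphaF; omega
  have hi1' : i - 1 < Ne := by omega
  have hmod : (alphaF Ne k i - 1) % (2 * Ne) = i - 1 := by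
    rw [hsub, Nat.mul_add_mod]
    exact Nat.mod_eq_of_lt (by omega)
  have hiota : iotaF Ne (alphaF Ne k i) = i := by
    unfold iotaF; rw [hmod, Nat.mod_eq_of_lt hi1']; omega
  have hkappa : kappaF Ne (alphaF Ne k i) = k := by
    unfold kappaF
    rw [hsub, Nat.mul_add_div (by omega), Nat.div_eq_of_lt (by omega)]; omega
  have havec : avec Ne i (alphaF Ne k i) = pvec := by
    unfold avec alphaF
    rw [if_pos]
    rw [show 2 * Ne * (k - 1) + i = Ne * (2 * (k - 1)) + i by ring, Nat.mul_add_mod]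
  have hcvec : cvec Ne k (alphaF Ne k i) = rvec := by
    unfold cvec
    rw [if_pos (Or.inl (by omega))]
  have hbvec : bvec Ne x j (alphaF Ne k i) = if x i j k = 1 then pvec else rvec := by
    unfold bvec; rw [hiota, hkappa]
  rw [havec, hcvec, hbvec]
  rcases hx i j k with h | h <;> simp [h, trip, pvec, rvec, Fin.sum_univ_four] <;> norm_num
end

section
/- (Full expressiveness of B-CP.) For every Boolean tensor X ∈ {0,1}^{N_e × N_e × N_r} there exist D ∈ ℕ, Δ > 0, and matrices A, B ∈ {+Δ,−Δ}^{N_e × D}, C ∈ {+Δ,−Δ}^{N_r × D} such that for all i, j ∈ [N_e], k ∈ [N_r]: x_{ijk} = ∑_{d=1}^{D} A_{id} B_{jd} C_{kd}. Moreover one can take D = 8·N_e·N_r and Δ = 1/2. -/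
open Classical in
noncomputable def Af (x : ℕ → ℕ → ℕ → ℝ) (Ne i d : ℕ) : ℝ :=
  if (d-1) % 2 = 0 then 1/2
  else if x i ((d-1)/8 % Ne + 1) ((d-1)/(8*Ne) + 1) = 1 then 1/2 else -(1/2)

open Classical in
noncomputable def Bf (Ne j d : ℕ) : ℝ :=
  if (d-1) % 8 / 2 % 2 = 1 then (if j = (d-1)/8 % Ne + 1 then 1/2 else -(1/2)) else 1/2

open Classical in
noncomputable def Cf (Ne k d : ℕ) : ℝ :=
  if (d-1) % 8 / 4 = 1 then (if k = (d-1)/(8*Ne) + 1 then 1/2 else -(1/2)) else 1/2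

lemma sum_range_mul (a b : ℕ) (f : ℕ → ℝ) :
    ∑ m ∈ Finset.range (a * b), f m
      = ∑ i ∈ Finset.range b, ∑ t ∈ Finset.range a, f (a * i + t) := by
  induction b with
  | zero => simp
  | succ n ih =>
      rw [Nat.mul_succ, Finset.sum_range_add, ih, Finset.sum_range_succ]

lemma block_sum (x : ℕ → ℕ → ℕ → ℝ) (Ne : ℕ) (hNe : 0 < Ne)
    (i j k jj kk : ℕ) (hjj : jj < Ne)
    (hxv : x i (jj+1) (kk+1) = 0 ∨ x i (jj+1) (kk+1) = 1) :
    ∑ t ∈ Finset.range 8,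
        (Af x Ne i (1+(8*(Ne*kk+jj)+t)) * Bf Ne j (1+(8*(Ne*kk+jj)+t))
          * Cf Ne k (1+(8*(Ne*kk+jj)+t)))
      = if j = jj+1 ∧ k = kk+1 then x i (jj+1) (kk+1) else 0 := by
  classical
  set q := Ne*kk+jj with hqdef
  have hq1 : q % Ne = jj := by
    rw [hqdef, Nat.mul_add_mod, Nat.mod_eq_of_lt hjj]
  have hq2 : q / Ne = kk := by
    rw [hqdef, Nat.mul_add_div hNe, Nat.div_eq_of_lt hjj, add_zero]
  set S : ℝ := if x i (jj+1) (kk+1) = 1 then 1/2 else -(1/2) with hS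
  set Ej : ℝ := if j = jj+1 then 1/2 else -(1/2) with hEj
  set Ek : ℝ := if k = kk+1 then 1/2 else -(1/2) with hEk
  have key : ∀ t ∈ Finset.range 8,
      Af x Ne i (1+(8*q+t)) * Bf Ne j (1+(8*q+t)) * Cf Ne k (1+(8*q+t))
        = (if t % 2 = 0 then (1/2:ℝ) else S)
          * (if t / 2 % 2 = 1 then Ej else 1/2)
          * (if t / 4 = 1 then Ek else 1/2) := by
    intro t ht
    simp only [Finset.mem_range] at ht
    have e1 : 1+(8*q+t)-1 = 8*q+t := by omega
    have e2 : (8*q+t) % 2 = t % 2 := by omega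
    have e3 : (8*q+t) / 8 = q := by omega
    have e4 : (8*q+t) % 8 = t := by omega
    have e5 : (8*q+t) / (8*Ne) = kk := by
      rw [← Nat.div_div_eq_div_mul, e3, hq2]
    rw [Af, Bf, Cf, e1, e2, e3, e4, e5, hq1]
  rw [Finset.sum_congr rfl key]
  have expand : ∑ t ∈ Finset.range 8,
      ((if t % 2 = 0 then (1/2:ℝ) else S)
        * (if t / 2 % 2 = 1 then Ej else 1/2)
        * (if t / 4 = 1 then Ek else 1/2))
      = (1/2 + S) * (1/2 + Ej) * (1/2 + Ek) := by
    simp only [Finset.sum_range_succ, Finset.sum_range_zero]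
    norm_num
    ring
  rw [expand, hS, hEj, hEk]
  by_cases hj : j = jj+1
  · by_cases hk : k = kk+1
    · rw [if_pos hj, if_pos hk, if_pos (show j = jj+1 ∧ k = kk+1 from ⟨hj, hk⟩)]
      rcases hxv with h | h <;> rw [h] <;> norm_num
    · rw [if_pos hj, if_neg hk,
        if_neg (show ¬(j = jj+1 ∧ k = kk+1) from fun hc => hk hc.2)]
      ring
  · rw [if_neg hj, if_neg (show ¬(j = jj+1 ∧ k = kk+1) from fun hc => hj hc.1)]
    ring

theorem stmt18 (Ne Nr : ℕ) (hNe : 0 < Ne) (hNr : 0 < Nr)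
    (x : ℕ → ℕ → ℕ → ℝ)
    (hx : ∀ i j k, 1 ≤ i → i ≤ Ne → 1 ≤ j → j ≤ Ne → 1 ≤ k → k ≤ Nr →
      x i j k = 0 ∨ x i j k = 1) :
    ∃ (D : ℕ) (Δ : ℝ) (A B C : ℕ → ℕ → ℝ),
      D = 8 * Ne * Nr ∧ Δ = 1 / 2 ∧ 0 < Δ ∧
      (∀ i d, 1 ≤ i → i ≤ Ne → 1 ≤ d → d ≤ D → A i d = Δ ∨ A i d = -Δ) ∧
      (∀ j d, 1 ≤ j → j ≤ Ne → 1 ≤ d → d ≤ D → B j d = Δ ∨ B j d = -Δ) ∧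
      (∀ k d, 1 ≤ k → k ≤ Nr → 1 ≤ d → d ≤ D → C k d = Δ ∨ C k d = -Δ) ∧
      (∀ i j k, 1 ≤ i → i ≤ Ne → 1 ≤ j → j ≤ Ne → 1 ≤ k → k ≤ Nr →
        x i j k = ∑ d ∈ Finset.Icc 1 D, A i d * B j d * C k d) := by
  classical
  refine ⟨8 * Ne * Nr, 1/2, Af x Ne, Bf Ne, Cf Ne, rfl, rfl, by norm_num, ?_, ?_, ?_, ?_⟩
  · intro i d _ _ _ _
    unfold Af; split_ifs <;> simp
  · intro j d _ _ _ _
    unfold Bf; split_ifs <;> simp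
  · intro k d _ _ _ _
    unfold Cf; split_ifs <;> simp
  · intro i j k hi1 hi2 hj1 hj2 hk1 hk2
    rw [← Finset.Ico_add_one_right_eq_Icc, Finset.sum_Ico_eq_sum_range]
    have hD : 8 * Ne * Nr + 1 - 1 = 8 * (Ne * Nr) := by rw [Nat.add_sub_cancel, mul_assoc]
    rw [hD, sum_range_mul, sum_range_mul]
    have step : ∀ kk ∈ Finset.range Nr, ∀ jj ∈ Finset.range Ne,
        ∑ t ∈ Finset.range 8,
          (Af x Ne i (1+(8*(Ne*kk+jj)+t)) * Bf Ne j (1+(8*(Ne*kk+jj)+t))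
            * Cf Ne k (1+(8*(Ne*kk+jj)+t)))
          = if j = jj+1 ∧ k = kk+1 then x i (jj+1) (kk+1) else 0 := by
      intro kk hkk jj hjj
      simp only [Finset.mem_range] at hkk hjj
      exact block_sum x Ne hNe i j k jj kk hjj
        (hx i (jj+1) (kk+1) hi1 hi2 (by omega) (by omega) (by omega) (by omega))
    rw [Finset.sum_congr rfl (fun kk hkk => Finset.sum_congr rfl (fun jj hjj => step kk hkk jj hjj))]
    rw [Finset.sum_eq_single (k-1)]
    · rw [Finset.sum_eq_single (j-1)]
      · have : j = (j-1)+1 ∧ k = (k-1)+1 := ⟨by omega, by omega⟩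
        rw [if_pos this, ← this.1, ← this.2]
      · intro jj _ hne
        rw [if_neg]; omega
      · intro h
        simp only [Finset.mem_range] at h; omega
    · intro kk _ hne
      apply Finset.sum_eq_zero
      intro jj _
      rw [if_neg]; omega
    · intro h
      simp only [Finset.mem_range] at h; omega
end

section
/- (Score decomposition.) With the B-CP* construction, for any i, j ∈ [N_e] and k ∈ [N_r], the total score θ_{ijk} = ∑_{γ ∈ [2N_eN_r]} ⟨a^{(b)}_{iγ} ∘ b^{(b)}_{jγ}, c^{(b)}_{kγ}⟩ equals 2·⟨a^{(b)}_{i,α(k,i)} ∘ b^{(b)}_{j,α(k,i)}, c^{(b)}_{k,α(k,i)}⟩. -/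
lemma trip_ppr : trip pvec pvec rvec = 1/2 := by
  simp [trip, pvec, rvec, Fin.sum_univ_four]; norm_num

lemma trip_prr : trip pvec rvec rvec = 0 := by
  simp [trip, pvec, rvec, Fin.sum_univ_four]

lemma trip_qpr : trip qvec pvec rvec = 0 := by
  simp [trip, qvec, pvec, rvec, Fin.sum_univ_four]

lemma trip_qrr : trip qvec rvec rvec = 0 := by
  simp [trip, qvec, rvec, Fin.sum_univ_four]

/-- Evaluation of one term of the sum at `γ = 2*Ne*K + D + 1` with `D < 2*Ne`. -/
lemma fval (Ne k : ℕ) (hNe : 0 < Ne) (x : ℕ → ℕ → ℕ → ℕ) (i j K D : ℕ) (hD : D < 2 * Ne) :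
    trip (avec Ne i (2 * Ne * K + D + 1)) (bvec Ne x j (2 * Ne * K + D + 1))
        (cvec Ne k (2 * Ne * K + D + 1)) =
      trip (if (D + 1) % Ne = i % Ne then pvec else qvec)
        (if x (D % Ne + 1) j (K + 1) = 1 then pvec else rvec)
        (if D < Ne ∨ K + 1 = k then rvec else -rvec) := by
  have h1 : 2 * Ne * K + D + 1 - 1 = 2 * Ne * K + D := by omega
  have h2 : (2 * Ne * K + D) % (2 * Ne) = D := by
    rw [Nat.mul_add_mod]; exact Nat.mod_eq_of_lt hD
  have h3 : (2 * Ne * K + D) / (2 * Ne) = K := by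
    rw [Nat.mul_add_div (by omega), Nat.div_eq_of_lt hD, Nat.add_zero]
  have h4 : (2 * Ne * K + D + 1) % Ne = (D + 1) % Ne := by
    have : 2 * Ne * K + D + 1 = D + 1 + Ne * (2 * K) := by ring
    rw [this, Nat.add_mul_mod_self_left]
  unfold avec bvec cvec iotaF kappaF
  rw [h1, h2, h3, h4]

theorem stmt19 (Ne Nr : ℕ) (hNe : 0 < Ne) (hNr : 0 < Nr)
    (x : ℕ → ℕ → ℕ → ℕ) (hx : ∀ i j k, x i j k = 0 ∨ x i j k = 1)
    (i j k : ℕ)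
    (hi1 : 1 ≤ i) (hi2 : i ≤ Ne) (hj1 : 1 ≤ j) (hj2 : j ≤ Ne)
    (hk1 : 1 ≤ k) (hk2 : k ≤ Nr) :
    ∑ γ ∈ Finset.Icc 1 (2 * Ne * Nr),
        trip (avec Ne i γ) (bvec Ne x j γ) (cvec Ne k γ) =
      2 * trip (avec Ne i (alphaF Ne k i)) (bvec Ne x j (alphaF Ne k i))
        (cvec Ne k (alphaF Ne k i)) := by
  set f : ℕ → ℝ := fun γ => trip (avec Ne i γ) (bvec Ne x j γ) (cvec Ne k γ) with hf
  -- rewrite the Icc sum as a range sum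
  have hIcc : ∀ (N : ℕ) (g : ℕ → ℝ),
      ∑ γ ∈ Finset.Icc 1 N, g γ = ∑ m ∈ Finset.range N, g (m + 1) := by
    intro N g
    rw [show Finset.Icc 1 N = Finset.map ⟨(· + 1), add_left_injective 1⟩ (Finset.range N) by
      ext m
      simp only [Finset.mem_Icc, Finset.mem_map, Finset.mem_range, Function.Embedding.coeFn_mk]
      constructor
      · rintro ⟨h1, h2⟩; exact ⟨m - 1, by omega, by omega⟩
      · rintro ⟨a, ha, rfl⟩; omega, Finset.sum_map]
    rfl
  have hsplit : ∀ (n : ℕ) (g : ℕ → ℝ), ∑ m ∈ Finset.range (2 * Ne * n), g m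
      = ∑ K ∈ Finset.range n, ∑ D ∈ Finset.range (2 * Ne), g (2 * Ne * K + D) := by
    intro n g
    induction n with
    | zero => simp
    | succ n ih => rw [Nat.mul_succ, Finset.sum_range_add, ih, Finset.sum_range_succ]
  rw [hIcc, hsplit]
  -- evaluate the αᵢ point on the RHS
  have hαi : alphaF Ne k i = 2 * Ne * (k - 1) + (i - 1) + 1 := by
    unfold alphaF; omega
  have hrhs : f (alphaF Ne k i)
      = trip pvec (if x i j k = 1 then pvec else rvec) rvec := by
    rw [hf]
    simp only [hαi]
    rw [fval Ne k hNe x i j (k - 1) (i - 1) (by omega)]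
    rw [if_pos (by rw [Nat.sub_add_cancel hi1]), if_pos (Or.inl (by omega))]
    rw [Nat.mod_eq_of_lt (by omega : i - 1 < Ne), Nat.sub_add_cancel hi1,
      Nat.sub_add_cancel hk1]
  -- the pair sum over each block
  have hpair : ∀ K M, M < Ne →
      f (2 * Ne * K + M + 1) + f (2 * Ne * K + (Ne + M) + 1)
        = if K + 1 = k then
            2 * trip (if (M + 1) % Ne = i % Ne then pvec else qvec)
              (if x (M + 1) j (K + 1) = 1 then pvec else rvec) rvec
          else 0 := by
    intro K M hM
    rw [hf]
    simp only
    rw [fval Ne k hNe x i j K M (by omega), fval Ne k hNe x i j K (Ne + M) (by omega)]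
    have e1 : (Ne + M + 1) % Ne = (M + 1) % Ne := by
      rw [show Ne + M + 1 = Ne + (M + 1) by ring, Nat.add_mod_left]
    have e2 : (Ne + M) % Ne = M := by rw [Nat.add_mod_left, Nat.mod_eq_of_lt hM]
    have e3 : M % Ne = M := Nat.mod_eq_of_lt hM
    rw [e1, e2, e3, if_pos (Or.inl hM)]
    have e4 : (if Ne + M < Ne ∨ K + 1 = k then rvec else -rvec)
        = if K + 1 = k then rvec else -rvec := by
      simp [show ¬(Ne + M < Ne) by omega]
    rw [e4]
    by_cases hK : K + 1 = k
    · rw [if_pos hK, if_pos hK]; ring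
    · rw [if_neg hK, if_neg hK, trip_neg]; ring
  -- injectivity of `mod Ne` on `[1, Ne]`
  have hmodinj : ∀ a b : ℕ, 1 ≤ a → a ≤ Ne → 1 ≤ b → b ≤ Ne → a % Ne = b % Ne → a = b := by
    intro a b ha1 ha2 hb1 hb2 h
    rcases eq_or_lt_of_le ha2 with rfl | ha
    · rcases eq_or_lt_of_le hb2 with rfl | hb
      · rfl
      · rw [Nat.mod_self, Nat.mod_eq_of_lt hb] at h; omega
    · rw [Nat.mod_eq_of_lt ha] at h
      rcases eq_or_lt_of_le hb2 with rfl | hb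
      · rw [Nat.mod_self] at h; omega
      · rw [Nat.mod_eq_of_lt hb] at h; omega
  calc
    ∑ K ∈ Finset.range Nr, ∑ D ∈ Finset.range (2 * Ne), f (2 * Ne * K + D + 1)
        = ∑ K ∈ Finset.range Nr, if K = k - 1 then
            ∑ M ∈ Finset.range Ne,
              2 * trip (if (M + 1) % Ne = i % Ne then pvec else qvec)
                (if x (M + 1) j (K + 1) = 1 then pvec else rvec) rvec
          else 0 := by
      refine Finset.sum_congr rfl fun K _ => ?_
      rw [show Finset.range (2 * Ne) = Finset.range (Ne + Ne) from by rw [two_mul],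
        Finset.sum_range_add, ← Finset.sum_add_distrib]
      have : ∀ M ∈ Finset.range Ne,
          f (2 * Ne * K + M + 1) + f (2 * Ne * K + (Ne + M) + 1)
            = if K = k - 1 then
                2 * trip (if (M + 1) % Ne = i % Ne then pvec else qvec)
                  (if x (M + 1) j (K + 1) = 1 then pvec else rvec) rvec
              else 0 := by
        intro M hM
        rw [hpair K M (Finset.mem_range.mp hM)]
        congr 1
        simp only [eq_iff_iff]
        omega
      rw [Finset.sum_congr rfl this]
      by_cases hK : K = k - 1
      · simp [hK]
      · simp [hK]
    _ = ∑ M ∈ Finset.range Ne,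
          2 * trip (if (M + 1) % Ne = i % Ne then pvec else qvec)
            (if x (M + 1) j (k - 1 + 1) = 1 then pvec else rvec) rvec := by
      rw [Finset.sum_ite_eq' (Finset.range Nr) (k - 1)]
      rw [if_pos (Finset.mem_range.mpr (by omega))]
    _ = 2 * trip pvec (if x i j k = 1 then pvec else rvec) rvec := by
      rw [Finset.sum_eq_single_of_mem (i - 1) (Finset.mem_range.mpr (by omega))]
      · rw [Nat.sub_add_cancel hi1, Nat.sub_add_cancel hk1, if_pos rfl]
      · intro M hM hMne
        have hMlt := Finset.mem_range.mp hM
        have hcond : ¬((M + 1) % Ne = i % Ne) := by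
          intro h
          have := hmodinj (M + 1) i (by omega) (by omega) hi1 hi2 h
          omega
        rw [if_neg hcond]
        rcases Classical.em (x (M + 1) j (k - 1 + 1) = 1) with h | h
        · rw [if_pos h, trip_qpr, mul_zero]
        · rw [if_neg h, trip_qrr, mul_zero]
    _ = 2 * f (alphaF Ne k i) := by rw [hrhs]
end
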